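/- Let k ≥ 2 and p ≥ 1. Define λ_{p,k} = sup over measurable functions g : [0,1]^{k−1} → {0,1,…,p−1} of the product Lebesgue measure of the set {x ∈ [0,1]^k : g(x₁,…,x_{k−1}) > g(x₂,…,x_k)}. Then λ_{p,k} ≤ (1 − ⌊(k−1)/p⌋/(k−1))·(1 − 1/k). -/

import Mathlib

open MeasureTheory unitInterval ENNReal Finset

lemma cyclic_descents {k p : ℕ} [NeZero k] (hk : 2 ≤ k) (hp : 1 ≤ p) (v : Fin k → Fin p) :
    (Finset.univ.filter (fun j : Fin k => v (j + 1) < v j)).card ≤ k - 1 - (k - 1) / p := by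
  classical
  set D := Finset.univ.filter (fun j : Fin k => v (j + 1) < v j) with hD
  set N := Finset.univ.filter (fun j : Fin k => ¬ v (j + 1) < v j) with hN
  have hcard : D.card + N.card = k := by
    rw [hD, hN, Finset.card_filter_add_card_filter_not]
    simp
  have hsum0 : (∑ j : Fin k, ((v (j + 1) : ℤ) - (v j : ℤ))) = 0 := by
    rw [Finset.sum_sub_distrib]
    rw [Fintype.sum_equiv (Equiv.addRight (1 : Fin k)) (fun j => ((v (j + 1) : ℤ)))
      (fun j => ((v j : ℤ))) (fun j => rfl)]
    ring
  have hsplit : (∑ j : Fin k, ((v (j + 1) : ℤ) - (v j : ℤ)))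
      = (∑ j ∈ D, ((v (j + 1) : ℤ) - (v j : ℤ))) + (∑ j ∈ N, ((v (j + 1) : ℤ) - (v j : ℤ))) := by
    rw [hD, hN, Finset.sum_filter_add_sum_filter_not]
  have hDle : (∑ j ∈ D, ((v (j + 1) : ℤ) - (v j : ℤ))) ≤ -(D.card : ℤ) := by
    calc (∑ j ∈ D, ((v (j + 1) : ℤ) - (v j : ℤ))) ≤ ∑ j ∈ D, (-1 : ℤ) := by
          apply Finset.sum_le_sum
          intro j hj
          rw [hD, Finset.mem_filter] at hj
          have : (v (j+1) : ℤ) < v j := by exact_mod_cast hj.2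
          omega
      _ = -(D.card : ℤ) := by simp
  have hNle : (∑ j ∈ N, ((v (j + 1) : ℤ) - (v j : ℤ))) ≤ (N.card : ℤ) * (p - 1) := by
    calc (∑ j ∈ N, ((v (j + 1) : ℤ) - (v j : ℤ))) ≤ ∑ j ∈ N, ((p : ℤ) - 1) := by
          apply Finset.sum_le_sum
          intro j hj
          have h1 : (v (j+1) : ℤ) ≤ (p : ℤ) - 1 := by
            have := (v (j+1)).isLt; omega
          have h2 : (0 : ℤ) ≤ v j := by positivity
          omega
      _ = (N.card : ℤ) * (p - 1) := by rw [Finset.sum_const]; ring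
  have key : (k : ℤ) ≤ (N.card : ℤ) * p := by
    have hz : (0 : ℤ) = (∑ j ∈ D, ((v (j + 1) : ℤ) - (v j : ℤ)))
        + (∑ j ∈ N, ((v (j + 1) : ℤ) - (v j : ℤ))) := by rw [← hsum0, hsplit]
    have hDk : (D.card : ℤ) + (N.card : ℤ) = (k : ℤ) := by exact_mod_cast hcard
    nlinarith [hDle, hNle]
  have keyN : k ≤ N.card * p := by exact_mod_cast key
  have hN1 : 1 ≤ N.card := by by_contra h; push_neg at h; interval_cases hc : N.card <;> omega
  have hq : (k - 1) / p ≤ N.card - 1 := by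
    have h1 : (k - 1) / p ≤ (N.card * p - 1) / p := Nat.div_le_div_right (by omega)
    have h2 : (N.card * p - 1) / p < N.card := by
      rw [Nat.div_lt_iff_lt_mul (by omega)]
      have : 1 ≤ N.card * p := by nlinarith
      omega
    omega
  show D.card ≤ _
  omega

theorem stmt_4 (k p : ℕ) (hk : 2 ≤ k) (hp : 1 ≤ p) :
    (⨆ (g : (Fin (k - 1) → I) → Fin p) (_ : Measurable g),
        volume {x : Fin k → I |
          g (fun i => x (Fin.castLE (by omega) i)) >
          g (fun i => x ⟨i.1 + 1, by omega⟩)}) ≤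
      (1 - ((((k - 1) / p : ℕ) : ℝ≥0∞) / ((k : ℝ≥0∞) - 1))) * (1 - 1 / (k : ℝ≥0∞)) := by
  haveI : NeZero k := ⟨by omega⟩
  have hle : k - 1 ≤ k := Nat.sub_le _ _
  set m : ℕ := k - 1 - (k - 1) / p with hm
  -- Step A: the RHS equals m / k
  have hRHS : (1 - ((((k - 1) / p : ℕ) : ℝ≥0∞) / ((k : ℝ≥0∞) - 1))) * (1 - 1 / (k : ℝ≥0∞))
      = (m : ℝ≥0∞) / (k : ℝ≥0∞) := by
    have hK1 : ((k : ℝ≥0∞) - 1) = ((k - 1 : ℕ) : ℝ≥0∞) := by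
      rw [eq_comm, ENNReal.natCast_sub, Nat.cast_one]
    have hk1ne : ((k - 1 : ℕ) : ℝ≥0∞) ≠ 0 := by
      simp only [ne_eq, Nat.cast_eq_zero]; omega
    have hk1top : ((k - 1 : ℕ) : ℝ≥0∞) ≠ ⊤ := by simp
    have hkne : ((k : ℕ) : ℝ≥0∞) ≠ 0 := by
      simp only [ne_eq, Nat.cast_eq_zero]; omega
    have hktop : ((k : ℕ) : ℝ≥0∞) ≠ ⊤ := by simp
    have hq : ((k - 1) / p : ℕ) ≤ k - 1 := Nat.div_le_self _ _
    have e1 : (1 : ℝ≥0∞) - (((k - 1) / p : ℕ) : ℝ≥0∞) / ((k : ℝ≥0∞) - 1)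
        = ((m : ℕ) : ℝ≥0∞) / ((k - 1 : ℕ) : ℝ≥0∞) := by
      rw [eq_comm, hK1, hm, ENNReal.natCast_sub, ENNReal.sub_div (fun _ _ => hk1ne),
        ENNReal.div_self hk1ne hk1top]
    have e2 : (1 : ℝ≥0∞) - 1 / (k : ℝ≥0∞) = ((k - 1 : ℕ) : ℝ≥0∞) / ((k : ℕ) : ℝ≥0∞) := by
      rw [eq_comm, ENNReal.natCast_sub, Nat.cast_one,
        ENNReal.sub_div (fun _ _ => hkne), ENNReal.div_self hkne hktop]
    rw [e1, e2, div_eq_mul_inv, div_eq_mul_inv, div_eq_mul_inv]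
    rw [mul_assoc, ← mul_assoc (((k-1:ℕ):ℝ≥0∞))⁻¹, ENNReal.inv_mul_cancel hk1ne hk1top,
      one_mul]
  rw [hRHS]
  refine iSup_le fun g => iSup_le fun hg => ?_
  -- the window function
  have hcast : ∀ i : Fin (k - 1), (i : ℕ) < k := fun i => by have := i.isLt; omega
  set v : (Fin k → I) → Fin k → Fin p :=
    fun x j => g (fun i => x (j + Fin.castLE hle i)) with hv
  set A : Fin k → Set (Fin k → I) := fun j => {x | v x (j + 1) < v x j} with hA
  -- statement set is A 0
  have hset : {x : Fin k → I |
      g (fun i => x (Fin.castLE (by omega) i)) >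
      g (fun i => x ⟨i.1 + 1, by omega⟩)} = A 0 := by
    ext x
    have h1 : ∀ i : Fin (k-1), ((0 : Fin k) + Fin.castLE hle i) = Fin.castLE hle i :=
      fun i => zero_add _
    have h2 : ∀ i : Fin (k-1), ((0 : Fin k) + 1 + Fin.castLE hle i)
        = (⟨i.1 + 1, by omega⟩ : Fin k) := by
      intro i
      have hi := i.isLt
      apply Fin.ext
      simp only [Fin.add_def, Fin.val_zero, Fin.val_one', Fin.coe_castLE, zero_add,
        Nat.mod_eq_of_lt (show (1:ℕ) < k by omega)]
      rw [Nat.mod_eq_of_lt (by omega)]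
      omega
    simp only [hA, hv, Set.mem_setOf_eq, gt_iff_lt]
    simp only [h1, h2]
  -- measurability
  have hvm : ∀ j : Fin k, Measurable fun x => v x j := by
    intro j
    exact hg.comp (measurable_pi_lambda _ fun i => measurable_pi_apply _)
  have hAm : ∀ j : Fin k, MeasurableSet (A j) := by
    intro j
    have : A j = (fun x => (v x j, v x (j+1))) ⁻¹' {q : Fin p × Fin p | q.2 < q.1} := rfl
    rw [this]
    exact ((hvm j).prodMk (hvm (j+1))) ((Set.toFinite _).measurableSet)
  -- measure preservation : each A j has the same volume as A 0
  have hT : ∀ j : Fin k, MeasurePreserving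
      (fun x : Fin k → I => fun i => x (i + j)) volume volume := by
    intro j
    have := volume_preserving_arrowCongr' (β₁ := I) (β₂ := I)
      ((Equiv.addRight j).symm) (MeasurableEquiv.refl I) (MeasurePreserving.id _)
    convert this using 2
    all_goals rfl
  have hAvol : ∀ j : Fin k, volume (A j) = volume (A 0) := by
    intro j
    have hpre : (fun x : Fin k → I => fun i => x (i + j)) ⁻¹' (A 0) = A j := by
      ext x
      simp only [hA, hv, Set.mem_preimage, Set.mem_setOf_eq]
      have h1 : ∀ i : Fin (k-1), ((0:Fin k) + Fin.castLE hle i + j) = j + Fin.castLE hle i := by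
        intro i; rw [zero_add, add_comm]
      have h2 : ∀ i : Fin (k-1), ((0:Fin k) + 1 + Fin.castLE hle i + j)
          = (j + 1) + Fin.castLE hle i := by
        intro i; rw [zero_add]; abel
      simp only [h1, h2]
    rw [← hpre, (hT j).measure_preimage (hAm 0).nullMeasurableSet]
  -- summing up
  have hsum : ∑ j : Fin k, volume (A j) ≤ (m : ℝ≥0∞) := by
    have hpt : ∀ x : Fin k → I,
        (∑ j : Fin k, (A j).indicator (1 : (Fin k → I) → ℝ≥0∞) x) ≤ (m : ℝ≥0∞) := by
      intro x
      have heq : (∑ j : Fin k, (A j).indicator (1 : (Fin k → I) → ℝ≥0∞) x)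
          = (((Finset.univ.filter (fun j : Fin k => v x (j + 1) < v x j)).card : ℕ) : ℝ≥0∞) := by
        rw [Finset.card_filter]
        push_cast
        refine Finset.sum_congr rfl fun j _ => ?_
        by_cases h : v x (j + 1) < v x j <;>
          simp [Set.indicator_apply, hA, Set.mem_setOf_eq, h]
      rw [heq]
      exact_mod_cast cyclic_descents hk hp (v x)
    calc ∑ j : Fin k, volume (A j)
        = ∑ j : Fin k, ∫⁻ x, (A j).indicator (1 : (Fin k → I) → ℝ≥0∞) x := by
          exact Finset.sum_congr rfl fun j _ => (lintegral_indicator_one (hAm j)).symm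
      _ = ∫⁻ x, ∑ j : Fin k, (A j).indicator (1 : (Fin k → I) → ℝ≥0∞) x :=
          (lintegral_finset_sum _ (fun j _ => measurable_one.indicator (hAm j))).symm
      _ ≤ ∫⁻ _ : Fin k → I, (m : ℝ≥0∞) := lintegral_mono hpt
      _ = (m : ℝ≥0∞) := by simp
  have hkmul : volume (A 0) * (k : ℝ≥0∞) ≤ (m : ℝ≥0∞) := by
    calc volume (A 0) * (k : ℝ≥0∞) = ∑ _j : Fin k, volume (A 0) := by
          rw [Finset.sum_const, Finset.card_univ, Fintype.card_fin, nsmul_eq_mul, mul_comm]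
      _ = ∑ j : Fin k, volume (A j) := (Finset.sum_congr rfl fun j _ => (hAvol j).symm)
      _ ≤ (m : ℝ≥0∞) := hsum
  rw [hset]
  rw [ENNReal.le_div_iff_mul_le (Or.inl (by simp only [ne_eq, Nat.cast_eq_zero]; omega))
    (Or.inl (by simp))]
  exact hkmul
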